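/- Let k>1. For every t > 1 one has (1/2)∫_{ℝ²} (ω₃+t)^{−2}|∇ω|² dz − k∫_{ℝ²} (ω₃+t)^{−2}·e₃·(∂ₓω∧∂_yω) dz = 4π(−(kt−1)/(t²−1) + (k/2)·log((t+1)/(t−1))). In particular this quantity tends to −∞ as t → 1⁺, so the energy functional E_hyp is unbounded from below. -/

import Mathlib

open MeasureTheory Real Filter Topology

noncomputable section

abbrev R2 := ℝ × ℝ
abbrev V3 := Fin 3 → ℝ

/-- Partial derivative in the `x` direction. -/
def pdx {E : Type*} [NormedAddCommGroup E] [NormedSpace ℝ E] (f : R2 → E) (z : R2) : E :=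
  fderiv ℝ f z (1, 0)

/-- Partial derivative in the `y` direction. -/
def pdy {E : Type*} [NormedAddCommGroup E] [NormedSpace ℝ E] (f : R2 → E) (z : R2) : E :=
  fderiv ℝ f z (0, 1)

/-- Euclidean scalar product on `ℝ³`. -/
def dot3 (a b : V3) : ℝ := a 0 * b 0 + a 1 * b 1 + a 2 * b 2

/-- Cross product on `ℝ³`. -/
def cross3 (a b : V3) : V3 :=
  ![a 1 * b 2 - a 2 * b 1, a 2 * b 0 - a 0 * b 2, a 0 * b 1 - a 1 * b 0]

def e1 : V3 := ![1, 0, 0]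
def e2 : V3 := ![0, 1, 0]
def e3 : V3 := ![0, 0, 1]

/-- The conformal factor `μ(z) = 2/(1+|z|²)`. -/
def mu (z : R2) : ℝ := 2 / (1 + z.1 ^ 2 + z.2 ^ 2)

/-- Inverse stereographic projection `ω(z) = (μ x, μ y, 1 − μ)`. -/
def sphOmega (z : R2) : V3 := ![mu z * z.1, mu z * z.2, 1 - mu z]

/-- The conjugate inversion `z ↦ (x,−y)/(x²+y²)`. -/
def invz (z : R2) : R2 := (z.1 / (z.1 ^ 2 + z.2 ^ 2), -z.2 / (z.1 ^ 2 + z.2 ^ 2))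

/-- `u` is of class `C^m(ℝ̄²)`: it is `C^m` on `ℝ²` and `z ↦ u((x,−y)/(x²+y²))`
extends to a `C^m` function on all of `ℝ²`. -/
def CmBar (m : ℕ) {E : Type*} [NormedAddCommGroup E] [NormedSpace ℝ E] (u : R2 → E) : Prop :=
  ContDiff ℝ m u ∧ ∃ v : R2 → E, ContDiff ℝ m v ∧ ∀ z : R2, z ≠ 0 → v z = u (invz z)

/-- `∇f·∇g` for scalar functions. -/
def gdot (f g : R2 → ℝ) (z : R2) : ℝ := pdx f z * pdx g z + pdy f z * pdy g z

/-- `div(a ∇f)` for scalar functions. -/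
def divg (a f : R2 → ℝ) (z : R2) : ℝ :=
  pdx (fun w => a w * pdx f w) z + pdy (fun w => a w * pdy f w) z

/-- `|∇u|² = Σ_j |∇u_j|²`. -/
def gradNormSq (u : R2 → V3) (z : R2) : ℝ := ∑ j, ((pdx u z j) ^ 2 + (pdy u z j) ^ 2)

/-- Componentwise Laplacian. -/
def lapv (u : R2 → V3) (z : R2) : V3 := pdx (pdx u) z + pdy (pdy u) z

/-- `J_K(u) := −div(u₃^{−2}∇u) − u₃^{−3}|∇u|²e₃ + 2·K(u)·u₃^{−3}·∂ₓu∧∂_yu`. -/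
def JK (K : V3 → ℝ) (u : R2 → V3) (z : R2) : V3 := fun l =>
  -divg (fun w => ((u w 2) ^ 2)⁻¹) (fun w => u w l) z
    - ((u z 2) ^ 3)⁻¹ * gradNormSq u z * e3 l
    + 2 * K (u z) * ((u z 2) ^ 3)⁻¹ * cross3 (pdx u z) (pdy u z) l

/-- `J₀'(U)φ`: the pointwise derivative at `t = 0` of `t ↦ J₀(U + tφ)`. -/
def J0lin (k : ℝ) (U φ : R2 → V3) (z : R2) : V3 :=
  deriv (fun t : ℝ => JK (fun _ => k) (fun w => U w + t • φ w) z) 0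

def rk (k : ℝ) : ℝ := (Real.sqrt (k ^ 2 - 1))⁻¹

/-- `𝒰 = r_k(ω + k e₃)`. -/
def Uk (k : ℝ) (z : R2) : V3 := rk k • (sphOmega z + k • e3)

/-- `iz∇u := −y ∂ₓu + x ∂_yu`. -/
def izgrad (u : R2 → V3) (z : R2) : V3 := (-z.2) • pdx u z + z.1 • pdy u z

/-- Pointwise projection orthogonal to `ω`. -/
def Pproj (f : R2 → V3) (z : R2) : V3 := f z - dot3 (f z) (sphOmega z) • sphOmega z

/-- The generic element of `T_ωZ` with parameters `s, t, α`. -/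
def tanZ (k : ℝ) (s t α : V3) (z : R2) : V3 :=
  s - dot3 s (sphOmega z) • sphOmega z + cross3 t (sphOmega z)
    + dot3 α (k • sphOmega z + e3) • sphOmega z

end

/-!
The map `ω` is conformal with factor `μ`: `|∇ω|² = 2μ²` and `∂ₓω ∧ ∂_yω = -μ² ω`. Since
`ω₃ + t = ((1 + t)|z|² + t - 1) / (1 + |z|²)`, both integrands are radial, and polar
coordinates followed by `s = |z|²` turn them into integrals over `(0, ∞)` of rational
functions with elementary primitives. For the limit, `(t - 1)` times the energy is continuous
at `t = 1` (because `x log x → 0`) with the negative value `-2π(k - 1)`.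
-/

open MeasureTheory Real Filter Topology Set

section PartialDerivatives

variable {E : Type*} [NormedAddCommGroup E] [NormedSpace ℝ E]

theorem pdx_eq_of_hasDerivAt {f : R2 → E} {z : R2} {d : E} (hf : DifferentiableAt ℝ f z)
    (h : HasDerivAt (fun x => f (x, z.2)) d z.1) : pdx f z = d := by
  have hline : HasDerivAt (fun x => f (x, z.2)) (fderiv ℝ f z (1, 0)) z.1 := by
    simpa [Function.comp_def] using
      hf.hasFDerivAt.comp_hasDerivAt z.1 ((hasDerivAt_id z.1).prodMk (hasDerivAt_const _ z.2))
  exact hline.unique h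

theorem pdy_eq_of_hasDerivAt {f : R2 → E} {z : R2} {d : E} (hf : DifferentiableAt ℝ f z)
    (h : HasDerivAt (fun y => f (z.1, y)) d z.2) : pdy f z = d := by
  have hline : HasDerivAt (fun y => f (z.1, y)) (fderiv ℝ f z (0, 1)) z.2 := by
    simpa [Function.comp_def] using
      hf.hasFDerivAt.comp_hasDerivAt z.2 ((hasDerivAt_const _ z.1).prodMk (hasDerivAt_id z.2))
  exact hline.unique h

end PartialDerivatives

theorem mu_eq_div (z : R2) : mu z = 2 / (1 + (z.1 ^ 2 + z.2 ^ 2)) := by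
  rw [mu, add_assoc]

theorem mu_mul_one_add_sq (z : R2) : mu z * (1 + z.1 ^ 2 + z.2 ^ 2) = 2 := by
  unfold mu; field_simp

theorem hasDerivAt_mu_fst (x y : ℝ) :
    HasDerivAt (fun s => mu (s, y)) (-(mu (x, y) ^ 2 * x)) x := by
  have hq : HasDerivAt (fun s : ℝ => 1 + s ^ 2 + y ^ 2) (2 * x) x := by
    simpa using ((hasDerivAt_pow 2 x).const_add 1).add_const (y ^ 2)
  refine ((hasDerivAt_const x (2 : ℝ)).fun_div hq (by positivity)).congr_deriv ?_
  unfold mu; field_simp; ring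

theorem hasDerivAt_mu_snd (x y : ℝ) :
    HasDerivAt (fun s => mu (x, s)) (-(mu (x, y) ^ 2 * y)) y := by
  have hq : HasDerivAt (fun s : ℝ => 1 + x ^ 2 + s ^ 2) (2 * y) y := by
    simpa using (hasDerivAt_pow 2 y).const_add (1 + x ^ 2)
  refine ((hasDerivAt_const y (2 : ℝ)).fun_div hq (by positivity)).congr_deriv ?_
  unfold mu; field_simp; ring

theorem differentiable_sphOmega : Differentiable ℝ sphOmega := by
  have hmu : Differentiable ℝ mu := fun z => by
    have : 1 + z.1 ^ 2 + z.2 ^ 2 ≠ 0 := by positivity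
    unfold mu; fun_prop (disch := assumption)
  refine fun z => differentiableAt_pi.2 fun j => ?_
  fin_cases j <;> simp only [sphOmega, Fin.zero_eta, Fin.mk_one, Fin.reduceFinMk, Fin.isValue,
    Matrix.cons_val_zero, Matrix.cons_val_one, Matrix.cons_val] <;> fun_prop

theorem pdx_sphOmega (z : R2) :
    pdx sphOmega z = ![mu z - mu z ^ 2 * z.1 ^ 2, -(mu z ^ 2 * z.1 * z.2), mu z ^ 2 * z.1] := by
  refine pdx_eq_of_hasDerivAt (differentiable_sphOmega z) (hasDerivAt_pi.2 fun j => ?_)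
  have hmu : HasDerivAt (fun s => mu (s, z.2)) (-(mu z ^ 2 * z.1)) z.1 :=
    hasDerivAt_mu_fst z.1 z.2
  fin_cases j <;> simp only [sphOmega, Fin.zero_eta, Fin.mk_one, Fin.reduceFinMk, Fin.isValue,
    Matrix.cons_val_zero, Matrix.cons_val_one, Matrix.cons_val]
  · exact (hmu.mul (hasDerivAt_id' z.1)).congr_deriv (by ring)
  · exact (hmu.mul_const z.2).congr_deriv (by ring)
  · exact (hmu.const_sub 1).congr_deriv (by ring)

theorem pdy_sphOmega (z : R2) :
    pdy sphOmega z = ![-(mu z ^ 2 * z.1 * z.2), mu z - mu z ^ 2 * z.2 ^ 2, mu z ^ 2 * z.2] := by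
  refine pdy_eq_of_hasDerivAt (differentiable_sphOmega z) (hasDerivAt_pi.2 fun j => ?_)
  have hmu : HasDerivAt (fun s => mu (z.1, s)) (-(mu z ^ 2 * z.2)) z.2 :=
    hasDerivAt_mu_snd z.1 z.2
  fin_cases j <;> simp only [sphOmega, Fin.zero_eta, Fin.mk_one, Fin.reduceFinMk, Fin.isValue,
    Matrix.cons_val_zero, Matrix.cons_val_one, Matrix.cons_val]
  · exact (hmu.mul_const z.1).congr_deriv (by ring)
  · exact (hmu.mul (hasDerivAt_id' z.2)).congr_deriv (by ring)
  · exact (hmu.const_sub 1).congr_deriv (by ring)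

theorem dot3_pdx_add_dot3_pdy_sphOmega (z : R2) :
    dot3 (pdx sphOmega z) (pdx sphOmega z) + dot3 (pdy sphOmega z) (pdy sphOmega z)
      = 2 * mu z ^ 2 := by
  simp only [dot3, pdx_sphOmega, pdy_sphOmega, Fin.isValue, Matrix.cons_val_zero,
    Matrix.cons_val_one, Matrix.cons_val]
  linear_combination mu z ^ 3 * (z.1 ^ 2 + z.2 ^ 2) * mu_mul_one_add_sq z

theorem cross3_pdx_pdy_sphOmega (z : R2) :
    cross3 (pdx sphOmega z) (pdy sphOmega z) = -mu z ^ 2 • sphOmega z := by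
  ext j
  fin_cases j <;> simp only [cross3, pdx_sphOmega, pdy_sphOmega, sphOmega, Pi.smul_apply,
    smul_eq_mul, Fin.zero_eta, Fin.mk_one, Fin.reduceFinMk, Fin.isValue, Matrix.cons_val_zero,
    Matrix.cons_val_one, Matrix.cons_val]
  · ring
  · ring
  · linear_combination -mu z ^ 2 * mu_mul_one_add_sq z

theorem sphOmega_two_add (t : ℝ) (z : R2) :
    sphOmega z 2 + t
      = ((1 + t) * (z.1 ^ 2 + z.2 ^ 2) + (t - 1)) / (1 + (z.1 ^ 2 + z.2 ^ 2)) := by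
  have : 1 + (z.1 ^ 2 + z.2 ^ 2) ≠ 0 := by positivity
  simp only [sphOmega, Matrix.cons_val, mu_eq_div]
  field_simp
  ring

theorem weighted_dirichlet_sphOmega {t : ℝ} (ht : 1 < t) (z : R2) :
    ((sphOmega z 2 + t) ^ 2)⁻¹
        * (dot3 (pdx sphOmega z) (pdx sphOmega z) + dot3 (pdy sphOmega z) (pdy sphOmega z))
      = 8 * (((1 + t) * (z.1 ^ 2 + z.2 ^ 2) + (t - 1)) ^ 2)⁻¹ := by
  rw [dot3_pdx_add_dot3_pdy_sphOmega, sphOmega_two_add, mu_eq_div]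
  have hq : 0 ≤ z.1 ^ 2 + z.2 ^ 2 := by positivity
  generalize z.1 ^ 2 + z.2 ^ 2 = q at hq ⊢
  have hP : 0 < (1 + t) * q + (t - 1) := by nlinarith
  field_simp
  ring

theorem weighted_jacobian_sphOmega {t : ℝ} (ht : 1 < t) (z : R2) :
    ((sphOmega z 2 + t) ^ 2)⁻¹ * dot3 e3 (cross3 (pdx sphOmega z) (pdy sphOmega z))
      = 4 * (1 - (z.1 ^ 2 + z.2 ^ 2))
          / ((1 + (z.1 ^ 2 + z.2 ^ 2)) * ((1 + t) * (z.1 ^ 2 + z.2 ^ 2) + (t - 1)) ^ 2) := by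
  have hω : sphOmega z 2 = 1 - mu z := rfl
  rw [cross3_pdx_pdy_sphOmega, sphOmega_two_add]
  simp only [dot3, e3, Pi.smul_apply, smul_eq_mul, hω, mu_eq_div, Matrix.cons_val]
  have hq : 0 ≤ z.1 ^ 2 + z.2 ^ 2 := by positivity
  generalize z.1 ^ 2 + z.2 ^ 2 = q at hq ⊢
  have hP : 0 < (1 + t) * q + (t - 1) := by nlinarith
  field_simp
  ring

theorem integral_comp_sq_add_sq (g : ℝ → ℝ) :
    ∫ z : ℝ × ℝ, g (z.1 ^ 2 + z.2 ^ 2) = π * ∫ s in Ioi 0, g s := by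
  have hpolar (p : ℝ × ℝ) : p.1 • g ((polarCoord.symm p).1 ^ 2 + (polarCoord.symm p).2 ^ 2)
      = p.1 * g (p.1 ^ 2) * 1 := by
    rw [polarCoord_symm_apply, mul_pow, mul_pow, ← mul_add, cos_sq_add_sin_sq, mul_one,
      smul_eq_mul, mul_one]
  have hsq : ∫ s in Ioi 0, g s = ∫ r in Ioi 0, 2 * (r * g (r ^ 2)) := by
    rw [← integral_comp_rpow_Ioi g two_ne_zero]
    refine setIntegral_congr_fun measurableSet_Ioi fun r _ => ?_
    rw [abs_two, smul_eq_mul, rpow_two, show (2 : ℝ) - 1 = 1 by norm_num, rpow_one, mul_assoc]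
  rw [← integral_comp_polarCoord_symm, polarCoord_target, Measure.volume_eq_prod]
  simp_rw [hpolar]
  rw [setIntegral_prod_mul (fun r => r * g (r ^ 2)) (fun _ => (1 : ℝ)), hsq, integral_const_mul]
  simp only [integral_const, smul_eq_mul, mul_one, measureReal_restrict_apply_univ,
    Real.volume_real_Ioo]
  rw [max_eq_left (by linarith [pi_pos])]
  ring

theorem integral_Ioi_inv_sq_affine {a b : ℝ} (ha : 0 < a) (hb : 0 < b) :
    ∫ s in Ioi 0, ((a * s + b) ^ 2)⁻¹ = (a * b)⁻¹ := by
  have hpos : ∀ s ∈ Ici (0 : ℝ), 0 < a * s + b := fun s (hs : 0 ≤ s) => by positivity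
  have hderiv : ∀ s ∈ Ici (0 : ℝ),
      HasDerivAt (fun s => -(a * (a * s + b))⁻¹) ((a * s + b) ^ 2)⁻¹ s := fun s hs => by
    have hlin : HasDerivAt (fun s => a * (a * s + b)) (a * a) s := by
      simpa using ((hasDerivAt_id s).const_mul a |>.add_const b).const_mul a
    have := (hpos s hs).ne'
    refine (hlin.fun_inv (by positivity)).neg.congr_deriv ?_
    field_simp
  have hlim : Tendsto (fun s => -(a * (a * s + b))⁻¹) atTop (𝓝 0) := by
    simpa using (tendsto_inv_atTop_zero.comp <| Tendsto.const_mul_atTop ha <|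
      tendsto_atTop_add_const_right _ b <| tendsto_id.const_mul_atTop ha).neg
  rw [integral_Ioi_of_hasDerivAt_of_nonneg' hderiv (fun _ _ => by positivity) hlim]
  simp

theorem integrableOn_jacobian_profile {t : ℝ} (ht : 1 < t) :
    IntegrableOn (fun s => 4 * (1 - s) / ((1 + s) * ((1 + t) * s + (t - 1)) ^ 2)) (Ioi 0) := by
  have hmajorant : IntegrableOn (fun s => 4 * (((1 + t) * s + (t - 1)) ^ 2)⁻¹) (Ioi 0) := by
    refine Integrable.of_integral_ne_zero ?_
    rw [integral_const_mul, integral_Ioi_inv_sq_affine (by linarith) (by linarith)]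
    have : 0 < (1 + t) * (t - 1) := by nlinarith
    positivity
  refine hmajorant.mono' (by fun_prop : Measurable _).aestronglyMeasurable
    ((ae_restrict_iff' measurableSet_Ioi).2 <| ae_of_all _ fun s (hs : 0 < s) => ?_)
  have hP : 0 < (1 + t) * s + (t - 1) := by nlinarith
  have hden : 0 < (1 + s) * ((1 + t) * s + (t - 1)) ^ 2 := by positivity
  rw [Real.norm_eq_abs, abs_div, abs_of_pos hden, div_le_iff₀ hden]
  calc |4 * (1 - s)| ≤ 4 * (1 + s) := abs_le.2 ⟨by linarith, by linarith⟩
    _ = 4 * (((1 + t) * s + (t - 1)) ^ 2)⁻¹ * ((1 + s) * ((1 + t) * s + (t - 1)) ^ 2) := by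
      rw [mul_assoc, mul_left_comm (_⁻¹), inv_mul_cancel₀ (by positivity), mul_one]

theorem hasDerivAt_jacobian_profile_primitive {t s : ℝ} (ht : 1 < t) (hs : 0 ≤ s) :
    HasDerivAt (fun s => 2 * log ((1 + s) / ((1 + t) * s + (t - 1)))
        - 2 * t * ((1 + s) / ((1 + t) * s + (t - 1))))
      (4 * (1 - s) / ((1 + s) * ((1 + t) * s + (t - 1)) ^ 2)) s := by
  have hP : 0 < (1 + t) * s + (t - 1) := by nlinarith
  have hu : HasDerivAt (fun s => (1 + s) / ((1 + t) * s + (t - 1)))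
      (-2 / ((1 + t) * s + (t - 1)) ^ 2) s := by
    have hnum : HasDerivAt (fun s : ℝ => 1 + s) 1 s := (hasDerivAt_id s).const_add 1
    have hden : HasDerivAt (fun s => (1 + t) * s + (t - 1)) (1 + t) s := by
      simpa using ((hasDerivAt_id s).const_mul (1 + t)).add_const (t - 1)
    refine (hnum.div hden hP.ne').congr_deriv ?_
    ring
  refine (((hu.log (by positivity)).const_mul 2).sub (hu.const_mul (2 * t))).congr_deriv ?_
  field_simp
  ring

theorem integral_Ioi_jacobian_profile {t : ℝ} (ht : 1 < t) :
    ∫ s in Ioi 0, 4 * (1 - s) / ((1 + s) * ((1 + t) * s + (t - 1)) ^ 2)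
      = 2 * (2 * t / (t ^ 2 - 1) - log ((t + 1) / (t - 1))) := by
  have hu : Tendsto (fun s => (1 + s) / ((1 + t) * s + (t - 1))) atTop (𝓝 (1 + t)⁻¹) := by
    have hP : Tendsto (fun s => (1 + t) * ((1 + t) * s + (t - 1))) atTop atTop :=
      (tendsto_atTop_add_const_right _ _ (tendsto_id.const_mul_atTop (by linarith))).const_mul_atTop
        (by linarith)
    have h : Tendsto (fun s => (1 + t)⁻¹ + 2 / ((1 + t) * ((1 + t) * s + (t - 1)))) atTop
        (𝓝 (1 + t)⁻¹) := by
      simpa using (tendsto_const_nhds.div_atTop hP).const_add (1 + t)⁻¹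
    refine h.congr' ((eventually_ge_atTop 0).mono fun s hs => ?_)
    have : 0 < (1 + t) * s + (t - 1) := by nlinarith
    field_simp
    ring
  have hlim := (((continuousAt_log (by positivity)).tendsto.comp hu).const_mul 2).sub
    (hu.const_mul (2 * t))
  rw [integral_Ioi_of_hasDerivAt_of_tendsto'
    (fun s hs => hasDerivAt_jacobian_profile_primitive ht hs) (integrableOn_jacobian_profile ht)
    hlim]
  have h1 : 0 < t - 1 := by linarith
  have h2 : t ^ 2 - 1 ≠ 0 := by nlinarith
  simp only [mul_zero, zero_add, add_zero]
  rw [log_div (by linarith) h1.ne', log_inv, log_div (by linarith) h1.ne', log_one, zero_sub,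
    add_comm t 1]
  field_simp
  ring

theorem integral_weighted_dirichlet_sphOmega {t : ℝ} (ht : 1 < t) :
    ∫ z, ((sphOmega z 2 + t) ^ 2)⁻¹
        * (dot3 (pdx sphOmega z) (pdx sphOmega z) + dot3 (pdy sphOmega z) (pdy sphOmega z))
      = 8 * π / (t ^ 2 - 1) := by
  simp_rw [weighted_dirichlet_sphOmega ht]
  rw [integral_comp_sq_add_sq (fun q => 8 * (((1 + t) * q + (t - 1)) ^ 2)⁻¹), integral_const_mul,
    integral_Ioi_inv_sq_affine (by linarith) (by linarith)]
  ring

theorem integral_weighted_jacobian_sphOmega {t : ℝ} (ht : 1 < t) :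
    ∫ z, ((sphOmega z 2 + t) ^ 2)⁻¹ * dot3 e3 (cross3 (pdx sphOmega z) (pdy sphOmega z))
      = 2 * π * (2 * t / (t ^ 2 - 1) - log ((t + 1) / (t - 1))) := by
  simp_rw [weighted_jacobian_sphOmega ht]
  rw [integral_comp_sq_add_sq (fun q => 4 * (1 - q) / ((1 + q) * ((1 + t) * q + (t - 1)) ^ 2)),
    integral_Ioi_jacobian_profile ht]
  ring

theorem tendsto_energy_nhdsGT_one {k : ℝ} (hk : 1 < k) :
    Tendsto (fun t : ℝ => 4 * π * (-((k * t - 1) / (t ^ 2 - 1))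
        + (k / 2) * log ((t + 1) / (t - 1)))) (𝓝[>] 1) atBot := by
  set h : ℝ → ℝ := fun t => -((k * t - 1) / (t + 1))
    + k / 2 * ((t - 1) * log (t + 1)) - k / 2 * ((t - 1) * log (t - 1)) with hh
  have hcont : ContinuousAt h 1 := by
    have hreg : ContinuousAt
        (fun t : ℝ => -((k * t - 1) / (t + 1)) + k / 2 * ((t - 1) * log (t + 1))) 1 := by
      fun_prop (disch := norm_num)
    exact hreg.sub (((continuous_mul_log.comp (continuous_sub_right 1)).continuousAt).const_mul _)
  have h1 : h 1 < 0 := by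
    norm_num [hh]
    linarith
  have hinv : Tendsto (fun t : ℝ => (t - 1)⁻¹) (𝓝[>] 1) atTop := by
    refine tendsto_inv_nhdsGT_zero.comp <| tendsto_nhdsWithin_of_tendsto_nhds_of_eventually_within
      _ ?_ (eventually_mem_nhdsWithin.mono fun t (ht : 1 < t) => sub_pos.2 ht)
    exact ((continuous_sub_right 1).tendsto' 1 0 (sub_self 1)).mono_left nhdsWithin_le_nhds
  have hprod := (hinv.atTop_mul_neg h1 (hcont.tendsto.mono_left nhdsWithin_le_nhds)).const_mul_atBot
    (by positivity : 0 < 4 * π)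
  refine hprod.congr' (eventually_mem_nhdsWithin.mono fun t (ht : 1 < t) => ?_)
  have h2 : t - 1 ≠ 0 := by linarith
  have h3 : t + 1 ≠ 0 := by linarith
  have h4 : t ^ 2 - 1 ≠ 0 := by nlinarith
  simp only [hh, log_div h3 h2]
  field_simp
  ring

/-- For every `t > 1`,
`E_hyp(ω + t e₃) = 4π(−(kt−1)/(t²−1) + (k/2)log((t+1)/(t−1)))`;
this quantity tends to `−∞` as `t → 1⁺`, so `E_hyp` is unbounded from below. -/
theorem statement14 (k : ℝ) (hk : 1 < k) :
    (∀ t : ℝ, 1 < t →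
      (1 / 2) * (∫ z, ((sphOmega z 2 + t) ^ 2)⁻¹
            * (dot3 (pdx sphOmega z) (pdx sphOmega z) + dot3 (pdy sphOmega z) (pdy sphOmega z)))
        - k * (∫ z, ((sphOmega z 2 + t) ^ 2)⁻¹
            * dot3 e3 (cross3 (pdx sphOmega z) (pdy sphOmega z)))
      = 4 * Real.pi * (-((k * t - 1) / (t ^ 2 - 1))
          + (k / 2) * Real.log ((t + 1) / (t - 1)))) ∧
    Tendsto (fun t : ℝ => 4 * Real.pi * (-((k * t - 1) / (t ^ 2 - 1))
        + (k / 2) * Real.log ((t + 1) / (t - 1))))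
      (nhdsWithin 1 (Set.Ioi 1)) atBot := by
  refine ⟨fun t ht => ?_, tendsto_energy_nhdsGT_one hk⟩
  rw [integral_weighted_dirichlet_sphOmega ht, integral_weighted_jacobian_sphOmega ht]
  ring
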